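/- The ring of integers of the biquadratic number field K = ℚ(i,√5) is ℤ[i,φ], the ℤ-span of {1, φ, i, iφ}: an element of K is integral over ℤ if and only if it lies in ℤ[i,φ]. -/

import Mathlib

/-- `K = ℚ(i, √5)` as an intermediate field of `ℂ/ℚ`. -/
noncomputable def K : IntermediateField ℚ ℂ :=
  IntermediateField.adjoin ℚ {Complex.I, (Real.sqrt 5 : ℂ)}

/-- `i` as an element of `K`. -/
noncomputable def iK : K := ⟨Complex.I, IntermediateField.subset_adjoin ℚ _ (by simp)⟩

/-- `√5` as an element of `K`. -/
noncomputable def sqrt5K : K := ⟨(Real.sqrt 5 : ℂ), IntermediateField.subset_adjoin ℚ _ (by simp)⟩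

/-- The golden ratio `φ = (1 + √5)/2` as an element of `K`. -/
noncomputable def phiK : K := (1 + sqrt5K) / 2

/-- `ℤ[i,φ]`, the subring of `K` generated by `i` and `φ`
(equivalently, the `ℤ`-span of `{1, φ, i, iφ}`). -/
noncomputable def Ziphi : Subring K := Subring.closure {iK, phiK}

/-!
Complex conjugation preserves `K` and integrality, so for an algebraic integer `x = α + βi` of `K`
(with `α, β` in the real field `ℚ(√5)`) the numbers `2α`, `2β` and `α² + β²` are algebraic integers
of `ℚ(√5)`, hence lie in `ℤ[φ]`. Writing `2α = a + bφ` and `2β = c + dφ`, the identity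
`(2α)² + (2β)² = 4(α² + β²)`, read coefficientwise in the basis `1, φ` modulo 4, forces
`a, b, c, d` to be even.
-/

open Polynomial
open scoped goldenRatio

theorem minpoly_add_mul_sqrt {d : ℕ} (hd : Irrational √d) (u : ℚ) {v : ℚ} (hv : v ≠ 0) :
    minpoly ℚ ((u : ℝ) + v * √d) = X ^ 2 - C (2 * u) * X + C (u ^ 2 - d * v ^ 2) := by
  set t : ℝ := u + v * √d
  set P : ℚ[X] := X ^ 2 - C (2 * u) * X + C (u ^ 2 - d * v ^ 2)
  have hP : P.Monic ∧ P.natDegree = 2 := by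
    simp only [P]
    exact ⟨by monicity!, by compute_degree!⟩
  have hroot : aeval t P = 0 := by
    simp only [P, t, map_add, map_sub, map_pow, map_mul, aeval_X, aeval_C, eq_ratCast]
    push_cast
    linear_combination (v : ℝ) ^ 2 * Real.sq_sqrt (Nat.cast_nonneg d)
  have hirr : t ∉ (algebraMap ℚ ℝ).range := by
    rintro ⟨q, hq⟩
    refine hd ⟨(q - u) / v, ?_⟩
    rw [eq_ratCast] at hq
    push_cast
    field_simp
    linarith
  have hint : IsIntegral ℚ t := ⟨P, hP.1, by rwa [aeval_def] at hroot⟩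
  refine (eq_of_monic_of_dvd_of_natDegree_le (minpoly.monic hint) hP.1
    (minpoly.dvd ℚ t hroot) ?_).symm
  rw [hP.2]
  exact (minpoly.two_le_natDegree_iff hint).mpr hirr

theorem exists_int_of_isIntegral_add_mul_sqrt {d : ℕ} (hd : Irrational √d) {u v : ℚ}
    (h : IsIntegral ℤ ((u : ℝ) + v * √d)) : ∃ m n : ℤ, 2 * u = m ∧ u ^ 2 - d * v ^ 2 = n := by
  rcases eq_or_ne v 0 with rfl | hv
  · have hu : IsIntegral ℤ u :=
      (isIntegral_algebraMap_iff (algebraMap ℚ ℝ).injective).mp (by simpa using h)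
    obtain ⟨k, rfl⟩ := IsIntegrallyClosed.isIntegral_iff.mp hu
    exact ⟨2 * k, k ^ 2, by simp, by simp⟩
  · have hmin := (minpoly_add_mul_sqrt hd u hv).symm.trans
      (minpoly.isIntegrallyClosed_eq_field_fractions' ℚ h)
    set t : ℝ := u + v * √d
    refine ⟨-(minpoly ℤ t).coeff 1, (minpoly ℤ t).coeff 0, ?_, ?_⟩
    · have := congrArg (coeff · 1) hmin
      simp only [coeff_add, coeff_sub, coeff_X_pow, coeff_C_mul_X, coeff_C, coeff_map,
        eq_intCast] at this
      norm_num at this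
      push_cast
      linarith
    · have := congrArg (coeff · 0) hmin
      simp only [coeff_add, coeff_sub, coeff_X_pow, coeff_C_mul_X, coeff_C, coeff_map,
        eq_intCast] at this
      simpa using this

theorem Int.two_dvd_iff_two_mul_zmod_four (a : ℤ) : 2 ∣ a ↔ 2 * (a : ZMod 4) = 0 := by
  rw [show (2 : ZMod 4) * a = ((2 * a : ℤ) : ZMod 4) by push_cast; rfl,
    ZMod.intCast_zmod_eq_zero_iff_dvd]
  omega

theorem Int.two_dvd_sub_of_four_dvd_sq_sub_five_mul_sq {m k : ℤ} (h : 4 ∣ m ^ 2 - 5 * k ^ 2) :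
    2 ∣ m - k := by
  rw [Int.two_dvd_iff_two_mul_zmod_four]
  have h4 := (ZMod.intCast_zmod_eq_zero_iff_dvd _ 4).mpr h
  push_cast at h4 ⊢
  generalize (m : ZMod 4) = x at h4 ⊢
  generalize (k : ZMod 4) = y at h4 ⊢
  revert x y
  decide

theorem isIntegral_sqrt_five : IsIntegral ℤ √5 :=
  ⟨X ^ 2 - 5, by monicity!, by simp⟩

noncomputable def ratSqrtFive : Subalgebra ℚ ℝ where
  carrier := {r | ∃ p q : ℚ, r = p + q * √5}
  add_mem' := by
    rintro _ _ ⟨p, q, rfl⟩ ⟨p', q', rfl⟩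
    exact ⟨p + p', q + q', by push_cast; ring⟩
  mul_mem' := by
    rintro _ _ ⟨p, q, rfl⟩ ⟨p', q', rfl⟩
    refine ⟨p * p' + 5 * q * q', p * q' + q * p', ?_⟩
    push_cast
    linear_combination (q * q' : ℝ) * Real.sq_sqrt (show (0 : ℝ) ≤ 5 by norm_num)
  algebraMap_mem' r := ⟨r, 0, by simp⟩

theorem exists_int_of_isIntegral_of_mem_ratSqrtFive {r : ℝ} (hr : r ∈ ratSqrtFive)
    (h : IsIntegral ℤ r) : ∃ a b : ℤ, r = a + b * φ := by
  obtain ⟨u, v, rfl⟩ := hr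
  have hd : Irrational √((5 : ℕ) : ℝ) := Nat.prime_five.irrational_sqrt
  obtain ⟨m, n, hm, hn⟩ := exists_int_of_isIntegral_add_mul_sqrt hd (by simpa using h)
  -- `√5 * r = 5v + u√5` is integral too, and its trace `10v` is an integer
  have h' := isIntegral_sqrt_five.mul h
  rw [show √5 * (u + v * √5) = ((5 * v : ℚ) : ℝ) + u * √5 by
    push_cast
    linear_combination (v : ℝ) * Real.sq_sqrt (show (0 : ℝ) ≤ 5 by norm_num)] at h'
  obtain ⟨m', -, hm', -⟩ :=
    exists_int_of_isIntegral_add_mul_sqrt (u := 5 * v) (v := u) hd (by simpa using h')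
  have hm'sq : m' ^ 2 = 5 * m ^ 2 - 20 * n := by
    have : (m' ^ 2 : ℚ) = 5 * m ^ 2 - 20 * n := by
      rw [← hm', ← hm, ← hn]
      ring
    exact_mod_cast this
  obtain ⟨k, rfl⟩ : (5 : ℤ) ∣ m' :=
    (by norm_num : Prime (5 : ℤ)).dvd_of_dvd_pow (n := 2) ⟨m ^ 2 - 4 * n, by linarith⟩
  obtain ⟨j, hj⟩ : 2 ∣ m - k :=
    Int.two_dvd_sub_of_four_dvd_sq_sub_five_mul_sq ⟨n, by linarith⟩
  have hv : (v : ℝ) = k / 2 := by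
    push_cast at hm'
    exact_mod_cast (by linarith : v = k / 2)
  have hu : (u : ℝ) = j + k / 2 := by
    have : (m : ℚ) = 2 * j + k := by exact_mod_cast (by linarith : m = 2 * j + k)
    exact_mod_cast (by linarith : u = j + k / 2)
  refine ⟨j, k, ?_⟩
  rw [hu, hv, Real.goldenRatio]
  ring

theorem Int.eq_and_eq_of_add_mul_goldenRatio_eq {a b c d : ℤ} (h : a + b * φ = c + d * φ) :
    a = c ∧ b = d := by
  obtain rfl : b = d := by
    by_contra hne
    have hne' : (b - d : ℝ) ≠ 0 := sub_ne_zero.mpr (by exact_mod_cast hne)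
    refine Real.goldenRatio_irrational ⟨(c - a) / (b - d), ?_⟩
    push_cast
    rw [div_eq_iff hne']
    linarith
  exact ⟨by exact_mod_cast (by linarith : (a : ℝ) = c), rfl⟩

theorem Int.two_dvd_of_add_mul_goldenRatio_sq_add_sq_eq {a b c d e f : ℤ}
    (h : (a + b * φ) ^ 2 + (c + d * φ) ^ 2 = 4 * (e + f * φ)) :
    2 ∣ a ∧ 2 ∣ b ∧ 2 ∣ c ∧ 2 ∣ d := by
  have hcoeff : ((a ^ 2 + b ^ 2 + c ^ 2 + d ^ 2 : ℤ) : ℝ) +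
      (2 * a * b + b ^ 2 + 2 * c * d + d ^ 2 : ℤ) * φ = (4 * e : ℤ) + (4 * f : ℤ) * φ := by
    push_cast
    linear_combination h - (b ^ 2 + d ^ 2 : ℝ) * Real.goldenRatio_sq
  obtain ⟨h1, h2⟩ := Int.eq_and_eq_of_add_mul_goldenRatio_eq hcoeff
  replace h1 := (ZMod.intCast_zmod_eq_zero_iff_dvd _ 4).mpr ⟨e, h1⟩
  replace h2 := (ZMod.intCast_zmod_eq_zero_iff_dvd _ 4).mpr ⟨f, h2⟩
  simp only [Int.two_dvd_iff_two_mul_zmod_four]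
  push_cast at h1 h2
  generalize (a : ZMod 4) = x at h1 h2 ⊢
  generalize (b : ZMod 4) = y at h1 h2 ⊢
  generalize (c : ZMod 4) = z at h1 h2 ⊢
  generalize (d : ZMod 4) = w at h1 h2 ⊢
  revert x y z w
  decide

theorem isIntegral_ofReal_iff {r : ℝ} : IsIntegral ℤ (r : ℂ) ↔ IsIntegral ℤ r :=
  isIntegral_algebraMap_iff Complex.ofReal_injective

theorem Complex.isIntegral_I : IsIntegral ℤ Complex.I :=
  ⟨X ^ 2 + 1, by monicity!, by simp⟩

theorem isIntegral_goldenRatio : IsIntegral ℤ φ :=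
  ⟨X ^ 2 - X - 1, by monicity!, by simp [Real.goldenRatio_sq]⟩

theorem isIntegral_two_mul_re {z : ℂ} (hz : IsIntegral ℤ z) : IsIntegral ℤ (2 * z.re : ℝ) := by
  rw [← isIntegral_ofReal_iff, ← Complex.add_conj]
  exact hz.add (hz.map (starRingEnd ℂ).toIntAlgHom)

theorem isIntegral_two_mul_im {z : ℂ} (hz : IsIntegral ℤ z) : IsIntegral ℤ (2 * z.im : ℝ) := by
  simpa using (isIntegral_two_mul_re (Complex.isIntegral_I.mul hz)).neg

theorem isIntegral_normSq {z : ℂ} (hz : IsIntegral ℤ z) : IsIntegral ℤ (Complex.normSq z) := by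
  rw [← isIntegral_ofReal_iff, ← Complex.mul_conj]
  exact hz.mul (hz.map (starRingEnd ℂ).toIntAlgHom)

theorem re_mem_and_im_mem_of_mem_K {z : ℂ} (hz : z ∈ K) :
    z.re ∈ ratSqrtFive ∧ z.im ∈ ratSqrtFive := by
  have halg : ∀ x ∈ ({Complex.I, (√5 : ℂ)} : Set ℂ), IsAlgebraic ℚ x := by
    rintro x (rfl | rfl)
    · exact Complex.isIntegral_I.tower_top.isAlgebraic
    · exact (isIntegral_ofReal_iff.mpr isIntegral_sqrt_five).tower_top.isAlgebraic
  rw [← IntermediateField.mem_toSubalgebra, K,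
    IntermediateField.adjoin_toSubalgebra_of_isAlgebraic halg] at hz
  induction hz using Algebra.adjoin_induction with
  | mem x hx =>
    rcases hx with rfl | rfl
    · simp [zero_mem, one_mem]
    · simpa using ⟨0, 1, by simp⟩
  | algebraMap r => simpa using ⟨r, 0, by simp⟩
  | add x y _ _ hx hy => exact ⟨add_mem hx.1 hy.1, add_mem hx.2 hy.2⟩
  | mul x y _ _ hx hy =>
    simp only [Complex.mul_re, Complex.mul_im]
    exact ⟨sub_mem (mul_mem hx.1 hy.1) (mul_mem hx.2 hy.2),
      add_mem (mul_mem hx.1 hy.2) (mul_mem hx.2 hy.1)⟩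

theorem isIntegral_coe_K_iff {x : K} : IsIntegral ℤ (x : ℂ) ↔ IsIntegral ℤ x :=
  isIntegral_algebraMap_iff (algebraMap K ℂ).injective

theorem coe_iK : (iK : ℂ) = Complex.I := rfl

theorem coe_phiK : (phiK : ℂ) = φ := by
  rw [Real.goldenRatio]
  push_cast
  rfl

theorem Ziphi_le_integralClosure : Ziphi ≤ (integralClosure ℤ K).toSubring := by
  refine Subring.closure_le.mpr ?_
  rintro y (rfl | rfl) <;> rw [SetLike.mem_coe, Subalgebra.mem_toSubring, mem_integralClosure_iff,
    ← isIntegral_coe_K_iff]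
  · exact Complex.isIntegral_I
  · rw [coe_phiK, isIntegral_ofReal_iff]
    exact isIntegral_goldenRatio

theorem mem_Ziphi_of_re_eq_of_im_eq {x : K} {a b c d : ℤ} (hre : (x : ℂ).re = a + b * φ)
    (him : (x : ℂ).im = c + d * φ) : x ∈ Ziphi := by
  have hx : x = a + b * phiK + (c + d * phiK) * iK := by
    apply Subtype.ext
    apply Complex.ext <;>
      simp only [IntermediateField.coe_add, IntermediateField.coe_mul, SubringClass.coe_intCast,
        coe_phiK, coe_iK, Complex.add_re, Complex.add_im, Complex.mul_re, Complex.mul_im,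
        Complex.intCast_re, Complex.intCast_im, Complex.ofReal_re, Complex.ofReal_im,
        Complex.I_re, Complex.I_im] <;>
      linarith
  have hi : iK ∈ Ziphi := Subring.subset_closure (by simp)
  have hphi : phiK ∈ Ziphi := Subring.subset_closure (by simp)
  rw [hx]
  exact add_mem (add_mem (intCast_mem _ _) (mul_mem (intCast_mem _ _) hphi))
    (mul_mem (add_mem (intCast_mem _ _) (mul_mem (intCast_mem _ _) hphi)) hi)

theorem mem_Ziphi_of_isIntegral {x : K} (hx : IsIntegral ℤ x) : x ∈ Ziphi := by
  have hz : IsIntegral ℤ (x : ℂ) := isIntegral_coe_K_iff.mpr hx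
  obtain ⟨hre, him⟩ := re_mem_and_im_mem_of_mem_K x.2
  obtain ⟨a, b, hab⟩ := exists_int_of_isIntegral_of_mem_ratSqrtFive
    (two_mul (x : ℂ).re ▸ add_mem hre hre) (isIntegral_two_mul_re hz)
  obtain ⟨c, d, hcd⟩ := exists_int_of_isIntegral_of_mem_ratSqrtFive
    (two_mul (x : ℂ).im ▸ add_mem him him) (isIntegral_two_mul_im hz)
  obtain ⟨e, f, hef⟩ := exists_int_of_isIntegral_of_mem_ratSqrtFive
    (Complex.normSq_apply (x : ℂ) ▸ add_mem (mul_mem hre hre) (mul_mem him him))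
    (isIntegral_normSq hz)
  have hsq : ((a : ℝ) + b * φ) ^ 2 + (c + d * φ) ^ 2 = 4 * (e + f * φ) := by
    rw [← hab, ← hcd, ← hef, Complex.normSq_apply]
    ring
  obtain ⟨⟨a, rfl⟩, ⟨b, rfl⟩, ⟨c, rfl⟩, ⟨d, rfl⟩⟩ :=
    Int.two_dvd_of_add_mul_goldenRatio_sq_add_sq_eq hsq
  push_cast at hab hcd
  exact mem_Ziphi_of_re_eq_of_im_eq (a := a) (b := b) (c := c) (d := d) (by linarith)
    (by linarith)

/-- The ring of integers of K = ℚ(i,√5) is exactly ℤ[i,φ]. -/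
theorem stmt2 (x : K) : IsIntegral ℤ x ↔ x ∈ Ziphi :=
  ⟨mem_Ziphi_of_isIntegral, fun hx => Ziphi_le_integralClosure hx⟩
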